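/- Predictive dependence beyond (n, k): consider the mixed three-parameter beta model Ψ | α ~ PP(γ s^{-1-α}(1-s)^{β+α-1} 1_{(0,1]}(s) ds G_0(dx)) with γ > 0, β > 0, and α ~ π_α supported on (0,1). Then the posterior density of α given a sample of size n with k distinct features of multiplicities m_1,…,m_k is π_{α|Z}(da) ∝ exp(−γ ∑_{h=0}^{n-1} B(1−a, h+β+a)) ∏_{ℓ=1}^k B(m_ℓ − a, n − m_ℓ + β + a) π_α(da). Consequently, if π_α is non-degenerate, this posterior (and hence the predictive law of the new-feature process) genuinely depends on the multiplicities m_1,…,m_k, not only on n and k. -/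

import Mathlib

/-!
Given `α = a`, the posterior is the likelihood `L(m, a)` normalized against `π`. The normalizing
constant is positive because `L(m, ·) > 0` on `(0, 1)`. It is finite because every beta factor is at
most `B = B(1 - a, β + a)`, and `B` is also a term of the sum in the exponent, so
`L ≤ e^{-γB} B^k ≤ k! / γ^k`.

To see the dependence on the multiplicities, compare `m ≡ 1` with `m ≡ 2`. The recurrence
`x B(x, y + 1) = y B(x + 1, y)` makes the ratio of their likelihoods `((n - 2 + β + a) / (1 - a))^k`,
which is injective in `a`. If the two posteriors were equal, this ratio would be `π`-a.e. constant,
so `π` would be a point mass.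
-/

open MeasureTheory
open scoped ENNReal

noncomputable def eulerBeta (x y : ℝ) : ℝ :=
  ∫ t in Set.Ioo (0:ℝ) 1, t ^ (x - 1) * (1 - t) ^ (y - 1)

section EulerBeta

variable {x y : ℝ}

lemma eulerBeta_nonneg (x y : ℝ) : 0 ≤ eulerBeta x y :=
  setIntegral_nonneg measurableSet_Ioo fun _ ht =>
    mul_nonneg (Real.rpow_nonneg ht.1.le _) (Real.rpow_nonneg (by linarith [ht.2]) _)

lemma integrableOn_eulerBeta_integrand (hx : 0 < x) (hy : 0 < y) :
    IntegrableOn (fun t : ℝ => t ^ (x - 1) * (1 - t) ^ (y - 1)) (Set.Ioo 0 1) := by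
  have h := (Complex.betaIntegral_convergent (u := x) (v := y)
    (by simpa using hx) (by simpa using hy)).norm.1.mono_set Set.Ioo_subset_Ioc_self
  refine h.congr_fun (fun t ht => ?_) measurableSet_Ioo
  have h1t : (0:ℝ) < 1 - t := by linarith [ht.2]
  dsimp only
  rw [norm_mul, Complex.norm_cpow_eq_rpow_re_of_pos ht.1,
    show (1:ℂ) - t = ((1 - t : ℝ) : ℂ) by push_cast; ring, Complex.norm_cpow_eq_rpow_re_of_pos h1t]
  simp

lemma ofReal_eulerBeta (x y : ℝ) :
    (eulerBeta x y : ℂ) = Complex.betaIntegral x y := by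
  rw [Complex.betaIntegral, intervalIntegral.integral_of_le zero_le_one,
    integral_Ioc_eq_integral_Ioo, eulerBeta, ← integral_complex_ofReal]
  refine setIntegral_congr_fun measurableSet_Ioo fun t ht => ?_
  have h1t : (0:ℝ) < 1 - t := by linarith [ht.2]
  push_cast
  rw [Complex.ofReal_cpow ht.1.le, Complex.ofReal_cpow h1t.le]
  push_cast
  ring

lemma eulerBeta_add_one_right (hx : 0 < x) (hy : 0 < y) :
    eulerBeta x (y + 1) = y / x * eulerBeta (x + 1) y := by
  have h := Complex.betaIntegral_recurrence (u := x) (v := y)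
    (by simpa using hx) (by simpa using hy)
  rw [show (x:ℂ) + 1 = ((x + 1 : ℝ) : ℂ) by push_cast; ring,
    show (y:ℂ) + 1 = ((y + 1 : ℝ) : ℂ) by push_cast; ring, ← ofReal_eulerBeta, ← ofReal_eulerBeta] at h
  have h' : x * eulerBeta x (y + 1) = y * eulerBeta (x + 1) y := by exact_mod_cast h
  field_simp
  linarith

lemma eulerBeta_pos (hx : 0 < x) (hy : 0 < y) : 0 < eulerBeta x y := by
  rw [eulerBeta, setIntegral_pos_iff_support_of_nonneg_ae ?_ (integrableOn_eulerBeta_integrand hx hy)]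
  · have hsub : Set.Ioo (0:ℝ) 1 ⊆
        Function.support (fun t : ℝ => t ^ (x - 1) * (1 - t) ^ (y - 1)) ∩ Set.Ioo 0 1 :=
      fun t ht => ⟨(mul_pos (Real.rpow_pos_of_pos ht.1 _)
        (Real.rpow_pos_of_pos (by linarith [ht.2]) _)).ne', ht⟩
    exact (by simp : (0:ℝ≥0∞) < volume (Set.Ioo (0:ℝ) 1)).trans_le (measure_mono hsub)
  · filter_upwards [ae_restrict_mem measurableSet_Ioo] with t ht
    exact mul_nonneg (Real.rpow_nonneg ht.1.le _) (Real.rpow_nonneg (by linarith [ht.2]) _)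

lemma eulerBeta_le_eulerBeta {x' y' : ℝ} (hx : 0 < x) (hy : 0 < y) (hxx : x ≤ x')
    (hyy : y ≤ y') : eulerBeta x' y' ≤ eulerBeta x y := by
  refine setIntegral_mono_on (integrableOn_eulerBeta_integrand (hx.trans_le hxx) (hy.trans_le hyy))
    (integrableOn_eulerBeta_integrand hx hy) measurableSet_Ioo fun t ht => ?_
  have h1t : (0:ℝ) < 1 - t := by linarith [ht.2]
  exact mul_le_mul (Real.rpow_le_rpow_of_exponent_ge ht.1 ht.2.le (by linarith))
    (Real.rpow_le_rpow_of_exponent_ge h1t (by linarith [ht.1]) (by linarith))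
    (Real.rpow_nonneg h1t.le _) (Real.rpow_nonneg ht.1.le _)

lemma measurable_eulerBeta : Measurable fun p : ℝ × ℝ => eulerBeta p.1 p.2 := by
  have hF : StronglyMeasurable fun q : (ℝ × ℝ) × ℝ =>
      q.2 ^ (q.1.1 - 1) * (1 - q.2) ^ (q.1.2 - 1) :=
    Measurable.stronglyMeasurable (by fun_prop)
  exact (hF.integral_prod_right' (ν := volume.restrict (Set.Ioo 0 1))).measurable

end EulerBeta

section Normalization

variable {α : Type*} [MeasurableSpace α] {μ : Measure α}

lemma lintegral_ofReal_ne_zero [NeZero μ] {f : α → ℝ} (hf : AEMeasurable f μ)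
    (hpos : ∀ᵐ a ∂μ, 0 < f a) : ∫⁻ a, ENNReal.ofReal (f a) ∂μ ≠ 0 := by
  rw [Ne, lintegral_eq_zero_iff' hf.ennreal_ofReal]
  intro h0
  obtain ⟨a, ha, ha0⟩ := (hpos.and h0).exists
  exact (ENNReal.ofReal_pos.2 ha).ne' ha0

lemma lintegral_ofReal_ne_top [IsFiniteMeasure μ] {f : α → ℝ} {C : ℝ}
    (hle : ∀ᵐ a ∂μ, f a ≤ C) : ∫⁻ a, ENNReal.ofReal (f a) ∂μ ≠ ∞ := by
  refine ne_top_of_le_ne_top ?_ (lintegral_mono_ae (hle.mono fun a ha => ENNReal.ofReal_le_ofReal ha))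
  simp [lintegral_const, ENNReal.mul_eq_top]

lemma inv_lintegral_smul_withDensity_apply_mul {f : α → ℝ≥0∞} (h0 : ∫⁻ a, f a ∂μ ≠ 0)
    (htop : ∫⁻ a, f a ∂μ ≠ ∞) {A : Set α} (hA : MeasurableSet A) :
    ((∫⁻ a, f a ∂μ)⁻¹ • μ.withDensity f) A * ∫⁻ a, f a ∂μ = ∫⁻ a in A, f a ∂μ := by
  rw [Measure.smul_apply, smul_eq_mul, withDensity_apply _ hA, mul_comm, ← mul_assoc,
    ENNReal.mul_inv_cancel h0 htop, one_mul]

lemma ae_inv_lintegral_mul_eq_of_smul_withDensity_eq [SigmaFinite μ] {f g : α → ℝ≥0∞}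
    (hf : Measurable f) (hg : Measurable g)
    (h : (∫⁻ a, f a ∂μ)⁻¹ • μ.withDensity f = (∫⁻ a, g a ∂μ)⁻¹ • μ.withDensity g) :
    ∀ᵐ a ∂μ, (∫⁻ a, f a ∂μ)⁻¹ * f a = (∫⁻ a, g a ∂μ)⁻¹ * g a := by
  rw [← withDensity_smul _ hf, ← withDensity_smul _ hg,
    withDensity_eq_iff_of_sigmaFinite (hf.const_smul _).aemeasurable
      (hg.const_smul _).aemeasurable] at h
  exact h

lemma eq_dirac_of_ae_eq [MeasurableSingletonClass α] [IsProbabilityMeasure μ] {a₀ : α}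
    (h : ∀ᵐ a ∂μ, a = a₀) : μ = Measure.dirac a₀ := by
  have hmem : ∀ᵐ a ∂μ, a ∈ ({a₀} : Finset α) := by simpa using h
  have h1 : μ {a₀} = 1 := (prob_compl_eq_zero_iff (measurableSet_singleton a₀)).1 (ae_iff.1 h)
  rw [Measure.ae_mem_finset_iff, Finset.sum_singleton, h1, one_smul] at hmem
  exact hmem

lemma exists_eq_dirac_of_ae_eq_const [MeasurableSingletonClass α] [IsProbabilityMeasure μ]
    {β : Type*} {g : α → β} {s : Set α} {c : β} (hs : ∀ᵐ a ∂μ, a ∈ s) (hg : Set.InjOn g s)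
    (hc : ∀ᵐ a ∂μ, g a = c) : ∃ a₀, μ = Measure.dirac a₀ := by
  obtain ⟨a₀, ha₀, hga₀⟩ := (hs.and hc).exists
  refine ⟨a₀, eq_dirac_of_ae_eq ?_⟩
  filter_upwards [hs, hc] with a ha hga
  exact hg ha ha₀ (hga.trans hga₀.symm)

end Normalization

open scoped Nat

noncomputable def mixedBetaLikelihood (γ β : ℝ) (n : ℕ) {k : ℕ} (m : Fin k → ℕ) (a : ℝ) : ℝ :=
  Real.exp (-γ * ∑ h ∈ Finset.range n, eulerBeta (1 - a) ((h : ℝ) + β + a)) *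
    ∏ ℓ : Fin k, eulerBeta ((m ℓ : ℝ) - a) ((n : ℝ) - m ℓ + β + a)

lemma exp_neg_mul_mul_pow_le {γ x : ℝ} (hγ : 0 < γ) (hx : 0 ≤ x) (k : ℕ) :
    Real.exp (-γ * x) * x ^ k ≤ k ! / γ ^ k := by
  have h := Real.pow_div_factorial_le_exp _ (mul_nonneg hγ.le hx) k
  rw [div_le_iff₀ (by positivity), mul_pow] at h
  rw [le_div_iff₀ (by positivity), neg_mul, Real.exp_neg]
  calc (Real.exp (γ * x))⁻¹ * x ^ k * γ ^ k = (Real.exp (γ * x))⁻¹ * (γ ^ k * x ^ k) := by ring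
    _ ≤ (Real.exp (γ * x))⁻¹ * (Real.exp (γ * x) * k !) := by gcongr
    _ = k ! := by field_simp

lemma injOn_div_one_sub_pow {c : ℝ} (hc : 0 ≤ c) {k : ℕ} (hk : k ≠ 0) :
    Set.InjOn (fun a : ℝ => ((c + a) / (1 - a)) ^ k) (Set.Ioo 0 1) := by
  intro a ha b hb hab
  have ha' : 0 < 1 - a := by linarith [ha.2]
  have hb' : 0 < 1 - b := by linarith [hb.2]
  have hab' : (c + a) * (1 - b) = (c + b) * (1 - a) := by
    rwa [pow_left_inj₀ (div_nonneg (by linarith [ha.1]) ha'.le)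
      (div_nonneg (by linarith [hb.1]) hb'.le) hk, div_eq_div_iff ha'.ne' hb'.ne'] at hab
  nlinarith

section MixedBetaLikelihood

variable {γ β : ℝ} {n k : ℕ} {m : Fin k → ℕ} {a : ℝ}

lemma measurable_mixedBetaLikelihood (γ β : ℝ) (n : ℕ) (m : Fin k → ℕ) :
    Measurable (mixedBetaLikelihood γ β n m) := by
  have hB {f g : ℝ → ℝ} (hf : Measurable f) (hg : Measurable g) :
      Measurable fun a => eulerBeta (f a) (g a) :=
    measurable_eulerBeta.comp (hf.prodMk hg)
  unfold mixedBetaLikelihood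
  refine .mul (.exp (.const_mul (Finset.measurable_sum _ fun h _ => hB ?_ ?_) _))
    (Finset.measurable_prod _ fun ℓ _ => hB ?_ ?_) <;> fun_prop

lemma mixedBetaLikelihood_pos (hβ : 0 < β) (hm : ∀ ℓ, 1 ≤ m ℓ ∧ m ℓ ≤ n)
    (ha : a ∈ Set.Ioo 0 1) : 0 < mixedBetaLikelihood γ β n m a := by
  refine mul_pos (Real.exp_pos _) (Finset.prod_pos fun ℓ _ => eulerBeta_pos ?_ ?_)
  · have : (1 : ℝ) ≤ m ℓ := by exact_mod_cast (hm ℓ).1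
    linarith [ha.2]
  · have : (m ℓ : ℝ) ≤ n := by exact_mod_cast (hm ℓ).2
    linarith [ha.1]

lemma mixedBetaLikelihood_le (hγ : 0 < γ) (hβ : 0 < β) (hn : 0 < n)
    (hm : ∀ ℓ, 1 ≤ m ℓ ∧ m ℓ ≤ n) (ha : a ∈ Set.Ioo 0 1) :
    mixedBetaLikelihood γ β n m a ≤ k ! / γ ^ k := by
  set S := eulerBeta (1 - a) (β + a)
  have hsum : S ≤ ∑ h ∈ Finset.range n, eulerBeta (1 - a) ((h : ℝ) + β + a) := by
    simpa using Finset.single_le_sum (f := fun h : ℕ => eulerBeta (1 - a) ((h : ℝ) + β + a))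
      (fun _ _ => eulerBeta_nonneg _ _) (Finset.mem_range.2 hn)
  have hprod : ∏ ℓ : Fin k, eulerBeta ((m ℓ : ℝ) - a) ((n : ℝ) - m ℓ + β + a) ≤ S ^ k := by
    refine (Finset.prod_le_prod (fun _ _ => eulerBeta_nonneg _ _) fun ℓ _ => ?_).trans_eq
      (Fin.prod_const k S)
    have h1 : (1 : ℝ) ≤ m ℓ := by exact_mod_cast (hm ℓ).1
    have h2 : (m ℓ : ℝ) ≤ n := by exact_mod_cast (hm ℓ).2
    exact eulerBeta_le_eulerBeta (by linarith [ha.2]) (by linarith [ha.1]) (by linarith)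
      (by linarith)
  calc mixedBetaLikelihood γ β n m a ≤ Real.exp (-γ * S) * S ^ k := by
        refine mul_le_mul (Real.exp_le_exp.2 ?_) hprod
          (Finset.prod_nonneg fun _ _ => eulerBeta_nonneg _ _) (Real.exp_pos _).le
        nlinarith
    _ ≤ k ! / γ ^ k := exp_neg_mul_mul_pow_le hγ (eulerBeta_nonneg _ _) k

lemma mixedBetaLikelihood_const_one (hβ : 0 < β) (hn : 2 ≤ n) (ha : a ∈ Set.Ioo 0 1) :
    mixedBetaLikelihood γ β n (fun _ : Fin k => 1) a =
      (((n : ℝ) - 2 + β + a) / (1 - a)) ^ k * mixedBetaLikelihood γ β n (fun _ : Fin k => 2) a := by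
  have hn' : (2 : ℝ) ≤ n := by exact_mod_cast hn
  have hrec := eulerBeta_add_one_right (x := 1 - a) (y := (n : ℝ) - 2 + β + a)
    (by linarith [ha.2]) (by linarith [ha.1])
  rw [show (n : ℝ) - 2 + β + a + 1 = n - 1 + β + a by ring,
    show 1 - a + 1 = 2 - a by ring] at hrec
  simp only [mixedBetaLikelihood, Finset.prod_const, Finset.card_univ, Fintype.card_fin,
    Nat.cast_one, Nat.cast_ofNat]
  rw [hrec, mul_pow]
  ring

lemma exists_eq_dirac_of_ae_mul_likelihood_eq {π : Measure ℝ} [IsProbabilityMeasure π]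
    (hβ : 0 < β) (hn : 2 ≤ n) (hk : k ≠ 0) (hI : ∀ᵐ a ∂π, a ∈ Set.Ioo 0 1) {c₁ c₂ : ℝ≥0∞}
    (hc₁ : c₁ ≠ 0) (hc₁' : c₁ ≠ ∞)
    (h : ∀ᵐ a ∂π, c₁ * ENNReal.ofReal (mixedBetaLikelihood γ β n (fun _ : Fin k => 1) a) =
      c₂ * ENNReal.ofReal (mixedBetaLikelihood γ β n (fun _ : Fin k => 2) a)) :
    ∃ a₀, π = Measure.dirac a₀ := by
  have hn' : (2 : ℝ) ≤ n := by exact_mod_cast hn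
  have hratio : ∀ a ∈ Set.Ioo (0 : ℝ) 1, 0 ≤ (((n : ℝ) - 2 + β + a) / (1 - a)) ^ k :=
    fun a ha => pow_nonneg (div_nonneg (by linarith [ha.1]) (by linarith [ha.2])) k
  refine exists_eq_dirac_of_ae_eq_const hI (c := c₂)
    (g := fun a => c₁ * ENNReal.ofReal ((((n : ℝ) - 2 + β + a) / (1 - a)) ^ k)) ?_ ?_
  · intro a ha b hb hab
    rw [ENNReal.mul_right_inj hc₁ hc₁', ENNReal.ofReal_eq_ofReal_iff (hratio a ha) (hratio b hb)]
      at hab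
    exact injOn_div_one_sub_pow (by linarith) hk ha hb hab
  · have h2 : ∀ ℓ : Fin k, 1 ≤ 2 ∧ 2 ≤ n := fun _ => ⟨by omega, hn⟩
    filter_upwards [hI, h] with a ha h
    rw [mixedBetaLikelihood_const_one hβ hn ha, ENNReal.ofReal_mul (hratio a ha), ← mul_assoc] at h
    exact (ENNReal.mul_left_inj (ENNReal.ofReal_pos.2 (mixedBetaLikelihood_pos hβ h2 ha)).ne'
      ENNReal.ofReal_ne_top).1 h

end MixedBetaLikelihood

/-- Proposition 5.1: under the mixed three-parameter beta model
`Ψ | α ~ PP(γ s^{-1-α}(1-s)^{β+α-1} 1_{(0,1]}(s) ds G₀(dx))`, `α ~ π_α` on `(0,1)`, the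
marginal likelihood of a sample of size `n` with `k` distinct features of multiplicities
`m₁,…,m_k` given `α = a` is proportional to
`L(m, a) = exp(-γ ∑_{h<n} B(1-a, h+β+a)) ∏_ℓ B(m_ℓ - a, n - m_ℓ + β + a)`, so the
posterior of `α` is `π_{α|Z}(da) ∝ L(m, a) π_α(da)` (first conjunct).  Consequently, if
`π_α` is non-degenerate, the posterior — and hence the predictive law of the
new-feature process — genuinely depends on the multiplicities, not only on `(n, k)`
(second conjunct). -/
theorem stmt_17 (γ β : ℝ) (hγ : 0 < γ) (hβ : 0 < β)
    (π : Measure ℝ) [IsProbabilityMeasure π] (hπ : π (Set.Ioo (0:ℝ) 1) = 1)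
    (n k : ℕ) (hn : 2 ≤ n) (hk : 1 ≤ k)
    (L : (Fin k → ℕ) → ℝ → ℝ)
    (hL : ∀ m a, L m a =
      Real.exp (-γ * ∑ h ∈ Finset.range n, eulerBeta (1 - a) ((h : ℝ) + β + a)) *
        ∏ ℓ : Fin k, eulerBeta ((m ℓ : ℝ) - a) ((n : ℝ) - m ℓ + β + a))
    (post : (Fin k → ℕ) → Measure ℝ)
    (hpost : ∀ m, post m =
      (∫⁻ a, ENNReal.ofReal (L m a) ∂π)⁻¹ •
        π.withDensity (fun a => ENNReal.ofReal (L m a))) :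
    (∀ m : Fin k → ℕ, (∀ ℓ, 1 ≤ m ℓ ∧ m ℓ ≤ n) →
      ∀ A : Set ℝ, MeasurableSet A →
        post m A * ∫⁻ a, ENNReal.ofReal (L m a) ∂π
          = ∫⁻ a in A, ENNReal.ofReal (L m a) ∂π) ∧
    ((¬ ∃ a₀ : ℝ, π = Measure.dirac a₀) →
      ∃ m m' : Fin k → ℕ, (∀ ℓ, 1 ≤ m ℓ ∧ m ℓ ≤ n) ∧ (∀ ℓ, 1 ≤ m' ℓ ∧ m' ℓ ≤ n) ∧
        post m ≠ post m') := by
  obtain rfl : L = mixedBetaLikelihood γ β n := funext fun m => funext (hL m)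
  have hI : ∀ᵐ a ∂π, a ∈ Set.Ioo 0 1 := (mem_ae_iff_prob_eq_one measurableSet_Ioo).2 hπ
  have hmeas (m : Fin k → ℕ) := measurable_mixedBetaLikelihood γ β n m
  have hZ0 (m : Fin k → ℕ) (hm : ∀ ℓ, 1 ≤ m ℓ ∧ m ℓ ≤ n) :=
    lintegral_ofReal_ne_zero (hmeas m).aemeasurable
      (hI.mono fun a ha => mixedBetaLikelihood_pos hβ hm ha)
  have hZtop (m : Fin k → ℕ) (hm : ∀ ℓ, 1 ≤ m ℓ ∧ m ℓ ≤ n) :=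
    lintegral_ofReal_ne_top (μ := π)
      (hI.mono fun a ha => mixedBetaLikelihood_le hγ hβ (by omega) hm ha)
  refine ⟨fun m hm A hA => hpost m ▸ inv_lintegral_smul_withDensity_apply_mul (hZ0 m hm)
    (hZtop m hm) hA, fun hnd => ?_⟩
  have h1 : ∀ ℓ : Fin k, 1 ≤ 1 ∧ 1 ≤ n := fun _ => ⟨le_rfl, by omega⟩
  have h2 : ∀ ℓ : Fin k, 1 ≤ 2 ∧ 2 ≤ n := fun _ => ⟨by omega, hn⟩
  refine ⟨fun _ => 1, fun _ => 2, h1, h2, fun heq => hnd ?_⟩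
  have hdens := ae_inv_lintegral_mul_eq_of_smul_withDensity_eq (hmeas _).ennreal_ofReal
    (hmeas _).ennreal_ofReal ((hpost _).symm.trans (heq.trans (hpost _)))
  exact exists_eq_dirac_of_ae_mul_likelihood_eq hβ hn (by omega) hI
    (ENNReal.inv_ne_zero.2 (hZtop _ h1)) (ENNReal.inv_ne_top.2 (hZ0 _ h1)) hdens
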